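/- (Achievability of finite-length SPIR capacity.) For all integers K ≥ 2, N ≥ 2 and every finite message length L ≥ 1, there exists a zero-error SPIR scheme with messages of exactly L bits, total download D = ⌈L·N/(N−1)⌉ bits, and common randomness entropy H(S) = ⌈L/(N−1)⌉ bits; hence the rate L/⌈L/(1 − 1/N)⌉ is achievable with zero error at finite length L. -/

import Mathlib

open Finset

attribute [local instance] Classical.propDecidable

/-- Probability that the random variable `X` takes the value `a`, on a finite
sample space `Ω` with probability mass function `p`. -/
noncomputable def prob {Ω α : Type*} [Fintype Ω] (p : Ω → ℝ) (X : Ω → α) (a : α) : ℝ :=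
  ∑ ω : Ω, if X ω = a then p ω else 0

/-- Shannon entropy (in bits) of the random variable `X`. -/
noncomputable def ent {Ω α : Type*} [Fintype Ω] [Fintype α] (p : Ω → ℝ) (X : Ω → α) : ℝ :=
  - ∑ a : α, prob p X a * Real.logb 2 (prob p X a)

/-- Conditional Shannon entropy (in bits) `H(X | Y)`. -/
noncomputable def condEnt {Ω α β : Type*} [Fintype Ω] [Fintype α] [Fintype β]
    (p : Ω → ℝ) (X : Ω → α) (Y : Ω → β) : ℝ :=
  ent p (fun ω => (X ω, Y ω)) - ent p Y

/-- Shannon mutual information (in bits) `I(X ; Y)`. -/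
noncomputable def mutInfo {Ω α β : Type*} [Fintype Ω] [Fintype α] [Fintype β]
    (p : Ω → ℝ) (X : Ω → α) (Y : Ω → β) : ℝ :=
  ent p X + ent p Y - ent p (fun ω => (X ω, Y ω))

/-- `X` and `Y` are identically distributed. -/
def IdentDist {Ω α : Type*} [Fintype Ω] (p : Ω → ℝ) (X Y : Ω → α) : Prop :=
  ∀ a : α, prob p X a = prob p Y a

/-- `X` is uniformly distributed on `α`. -/
def Unif {Ω α : Type*} [Fintype Ω] [Fintype α] (p : Ω → ℝ) (X : Ω → α) : Prop :=
  ∀ a : α, prob p X a = 1 / (Fintype.card α : ℝ)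

/-- A zero-error SPIR scheme with `K` messages and `N` databases in which the answer of
database `n` consists of `d n` bits (so the total download is `D = ∑ n, d n` bits). -/
structure FinLenSPIR (K N L : ℕ) (d : Fin N → ℕ) where
  /-- the finite sample space -/
  Ω : Type
  [instΩ : Fintype Ω]
  /-- the probability mass function -/
  p : Ω → ℝ
  p_nonneg : ∀ ω, 0 ≤ p ω
  p_sum : ∑ ω : Ω, p ω = 1
  /-- value type of the common randomness -/
  𝓢 : Type
  [inst𝓢 : Fintype 𝓢]
  /-- value type of the user randomness -/
  𝓕 : Type
  [inst𝓕 : Fintype 𝓕]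
  /-- value types of the queries -/
  𝓠 : Fin N → Type
  [inst𝓠 : ∀ n, Fintype (𝓠 n)]
  /-- the messages -/
  W : ∀ k : Fin K, Ω → (Fin (L) → ZMod 2)
  /-- the common randomness -/
  S : Ω → 𝓢
  /-- the user randomness -/
  F : Ω → 𝓕
  /-- the queries -/
  Q : ∀ (_ : Fin K) (n : Fin N), Ω → 𝓠 n
  /-- the answers: `d n` bits from database `n` -/
  A : ∀ (_ : Fin K) (n : Fin N), Ω → (Fin (d n) → ZMod 2)
  /-- each message is uniformly distributed on the set of bit strings of its length -/
  hWunif : ∀ k, Unif p (W k)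
  /-- the messages, the common randomness and the user randomness are mutually
  independent -/
  hIndep : ∀ (w : ∀ k : Fin K, Fin (L) → ZMod 2) (s : 𝓢) (f : 𝓕),
    prob p (fun ω => ((fun k => W k ω), S ω, F ω)) (w, s, f)
      = (∏ k, prob p (W k) (w k)) * prob p S s * prob p F f
  /-- each query is a deterministic function of `F` -/
  hQ : ∀ k n, ∃ g : 𝓕 → 𝓠 n, ∀ ω, Q k n ω = g (F ω)
  /-- each answer is a deterministic function of the query, the messages and `S` -/
  hA : ∀ k n, ∃ g : 𝓠 n → (∀ k : Fin K, Fin (L) → ZMod 2) → 𝓢 → (Fin (d n) → ZMod 2),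
    ∀ ω, A k n ω = g (Q k n ω) (fun j => W j ω) (S ω)
  /-- correctness: `W_k` is a deterministic function of the answers and `F` -/
  hCorrect : ∀ k, ∃ g : (∀ n, Fin (d n) → ZMod 2) → 𝓕 → (Fin (L) → ZMod 2),
    ∀ ω, W k ω = g (fun n => A k n ω) (F ω)
  /-- user-privacy -/
  hUserPriv : ∀ (n : Fin N) (k k' : Fin K),
    IdentDist p (fun ω => (Q k n ω, A k n ω, (fun j => W j ω), S ω))
                (fun ω => (Q k' n ω, A k' n ω, (fun j => W j ω), S ω))
  /-- database-privacy -/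
  hDBPriv : ∀ k : Fin K,
    mutInfo p (fun ω => (fun j : {j : Fin K // j ≠ k} => W j.1 ω))
      (fun ω => ((fun n => Q k n ω), (fun n => A k n ω), F ω)) = 0

attribute [instance] FinLenSPIR.instΩ FinLenSPIR.inst𝓢 FinLenSPIR.inst𝓕 FinLenSPIR.inst𝓠

/-!
Give each of the `P = N - 1` non-reference servers at most `M = ⌈L / P⌉` bits of the message,
its `i`-th bit being read in round `i`. Every server receives the same uniformly random mask `F`
of coefficients for all message bits, flipped at the bits of the desired message it is responsible
for, and answers, for each round it takes part in, the round's inner product of its query with the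
messages plus the round's bit of the common randomness `S`. The reference server receives `F` itself
and takes part in all `M` rounds, so the difference of the two answers of a round is a bit of the
desired message: this costs `L + M` bits of download and `H(S) = M`. Each server alone sees a
uniformly random query (user privacy). Besides `F` and the desired message, the user learns only
the interference one-time-padded by `S`; together with the other messages these determine the
uniform sample bijectively, so the user's view is independent of the other messages (database
privacy).
-/

section Entropy

variable {Ω α β : Type*} [Fintype Ω]

theorem sum_prob [Fintype α] (p : Ω → ℝ) (X : Ω → α) :
    ∑ a, prob p X a = ∑ ω, p ω := by
  simp only [prob]
  rw [Finset.sum_comm]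
  simp

theorem sum_prob_pair_right [Fintype β] (p : Ω → ℝ) (X : Ω → α) (Y : Ω → β) (a : α) :
    ∑ b, prob p (fun ω => (X ω, Y ω)) (a, b) = prob p X a := by
  simp only [prob, Prod.mk.injEq, ite_and]
  rw [Finset.sum_comm]
  simp

theorem sum_prob_pair_left [Fintype α] (p : Ω → ℝ) (X : Ω → α) (Y : Ω → β) (b : β) :
    ∑ a, prob p (fun ω => (X ω, Y ω)) (a, b) = prob p Y b := by
  simp only [prob, Prod.mk.injEq, ite_and]
  rw [Finset.sum_comm]
  simp

theorem prob_pair_eq_mul_of_eq_mul [Fintype α] [Fintype β] {p : Ω → ℝ}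
    (hp : ∑ ω, p ω = 1) {X : Ω → α} {Y : Ω → β} (u : α → ℝ) (v : β → ℝ)
    (h : ∀ a b, prob p (fun ω => (X ω, Y ω)) (a, b) = u a * v b)
    (a : α) (b : β) :
    prob p (fun ω => (X ω, Y ω)) (a, b) = prob p X a * prob p Y b := by
  have hX : prob p X a = u a * ∑ b, v b := by
    rw [← sum_prob_pair_right p X Y, Finset.mul_sum]; simp only [h]
  have hY : prob p Y b = (∑ a, u a) * v b := by
    rw [← sum_prob_pair_left p X Y, Finset.sum_mul]; simp only [h]
  have huv : (∑ a, u a) * ∑ b, v b = 1 := by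
    rw [← hp, ← sum_prob p (fun ω => (X ω, Y ω)), Fintype.sum_prod_type, Finset.sum_mul_sum]
    simp only [h]
  rw [h, hX, hY]
  linear_combination (-(u a * v b)) * huv

theorem ent_pair_eq_add_of_indep [Fintype α] [Fintype β] {p : Ω → ℝ} (hp : ∑ ω, p ω = 1)
    {X : Ω → α} {Y : Ω → β}
    (h : ∀ a b, prob p (fun ω => (X ω, Y ω)) (a, b) = prob p X a * prob p Y b) :
    ent p (fun ω => (X ω, Y ω)) = ent p X + ent p Y := by
  have hlog (x y : ℝ) : x * y * Real.logb 2 (x * y)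
      = x * Real.logb 2 x * y + x * (y * Real.logb 2 y) := by
    rcases eq_or_ne x 0 with rfl | hx
    · simp
    rcases eq_or_ne y 0 with rfl | hy
    · simp
    rw [Real.logb_mul hx hy]; ring
  simp only [ent, Fintype.sum_prod_type, h, hlog, Finset.sum_add_distrib, ← Finset.mul_sum,
    ← Finset.sum_mul, sum_prob, hp]
  ring

theorem mutInfo_eq_zero_of_eq_mul [Fintype α] [Fintype β] {p : Ω → ℝ} (hp : ∑ ω, p ω = 1)
    {X : Ω → α} {Y : Ω → β} (u : α → ℝ) (v : β → ℝ)
    (h : ∀ a b, prob p (fun ω => (X ω, Y ω)) (a, b) = u a * v b) :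
    mutInfo p X Y = 0 := by
  rw [mutInfo, ent_pair_eq_add_of_indep hp (prob_pair_eq_mul_of_eq_mul hp u v h)]
  ring

theorem ent_of_unif [Fintype α] {p : Ω → ℝ} {X : Ω → α} (h : Unif p X) :
    ent p X = Real.logb 2 (Fintype.card α) := by
  rcases isEmpty_or_nonempty α with hα | hα
  · simp [ent]
  have hcard : (Fintype.card α : ℝ) ≠ 0 := by positivity
  unfold Unif at h
  simp only [ent, h, Finset.sum_const, Finset.card_univ, nsmul_eq_mul, one_div, Real.logb_inv]
  field_simp

end Entropy

section Uniform

variable {Ω Ω' α β γ : Type*} [Fintype Ω] [Fintype Ω']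

noncomputable def uniformMass (Ω : Type*) [Fintype Ω] : Ω → ℝ :=
  fun _ => (Fintype.card Ω : ℝ)⁻¹

theorem uniformMass_nonneg (ω : Ω) : 0 ≤ uniformMass Ω ω := by
  simp [uniformMass]

theorem sum_uniformMass [Nonempty Ω] : ∑ ω, uniformMass Ω ω = 1 := by
  simp [uniformMass]

theorem prob_uniformMass_self (x : Ω) :
    prob (uniformMass Ω) (fun ω => ω) x = (Fintype.card Ω : ℝ)⁻¹ := by
  simp [prob, uniformMass]

theorem prob_uniformMass_comp_equiv (e : Ω ≃ Ω') (X : Ω' → α) (a : α) :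
    prob (uniformMass Ω) (fun ω => X (e ω)) a = prob (uniformMass Ω') X a := by
  simp only [prob, uniformMass, Fintype.card_congr e]
  exact e.sum_comp fun ω' => if X ω' = a then _ else 0

theorem identDist_uniformMass_of_equiv (σ : Ω ≃ Ω) {X Y : Ω → α}
    (h : ∀ ω, X (σ ω) = Y ω) :
    IdentDist (uniformMass Ω) X Y := fun a => by
  simp only [← prob_uniformMass_comp_equiv σ X, h]

theorem prob_uniformMass_comp_fst [Fintype α] [Fintype β] [Nonempty β] (X : α → γ) (c : γ) :
    prob (uniformMass (α × β)) (fun x => X x.1) c = prob (uniformMass α) X c := by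
  simp only [prob, uniformMass, Fintype.sum_prod_type]
  simp [Fintype.card_prod]

theorem prob_uniformMass_comp_snd [Fintype α] [Fintype β] [Nonempty α] (Y : β → γ) (c : γ) :
    prob (uniformMass (α × β)) (fun x => Y x.2) c = prob (uniformMass β) Y c := by
  rw [← prob_uniformMass_comp_fst (β := α) Y c]
  exact prob_uniformMass_comp_equiv (Equiv.prodComm α β) (fun y => Y y.1) c

theorem unif_uniformMass_self : Unif (uniformMass Ω) (fun ω => ω) := fun x => by
  rw [prob_uniformMass_self, one_div]

theorem Unif.comp_equiv [Fintype α] {X : Ω' → α} (h : Unif (uniformMass Ω') X)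
    (e : Ω ≃ Ω') :
    Unif (uniformMass Ω) (fun ω => X (e ω)) := fun a => by
  rw [prob_uniformMass_comp_equiv, h]

theorem Unif.comp_fst [Fintype α] [Fintype β] [Fintype γ] [Nonempty β] {X : α → γ}
    (h : Unif (uniformMass α) X) : Unif (uniformMass (α × β)) (fun x => X x.1) := fun c => by
  rw [prob_uniformMass_comp_fst, h]

theorem Unif.comp_snd [Fintype α] [Fintype β] [Fintype γ] [Nonempty α] {Y : β → γ}
    (h : Unif (uniformMass β) Y) : Unif (uniformMass (α × β)) (fun x => Y x.2) := fun c => by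
  rw [prob_uniformMass_comp_snd, h]

theorem mutInfo_uniformMass_comp_equiv [Fintype α] [Fintype β] (e : Ω ≃ Ω') (X : Ω' → α)
    (Y : Ω' → β) :
    mutInfo (uniformMass Ω) (fun ω => X (e ω)) (fun ω => Y (e ω))
      = mutInfo (uniformMass Ω') X Y := by
  simp only [mutInfo, ent, prob_uniformMass_comp_equiv e,
    prob_uniformMass_comp_equiv e fun ω' => (X ω', Y ω')]

theorem mutInfo_uniformMass_prod_eq_zero [Fintype α] [Fintype β] [Fintype γ] [Nonempty α]
    [Nonempty β] (g : β → γ) :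
    mutInfo (uniformMass (α × β)) Prod.fst (fun x => g x.2) = 0 := by
  refine mutInfo_eq_zero_of_eq_mul sum_uniformMass (fun _ => (Fintype.card α : ℝ)⁻¹)
    (prob (uniformMass β) g) fun a c => ?_
  simp only [prob, uniformMass, Fintype.sum_prod_type, Prod.mk.injEq, ite_and]
  rw [Finset.sum_comm]
  simp [Finset.mul_sum, mul_comm]

theorem mutInfo_uniformMass_of_equiv_prod [Fintype α] [Fintype β] [Fintype γ] [Nonempty Ω]
    (e : Ω ≃ α × β) (g : β → γ) :
    mutInfo (uniformMass Ω) (fun ω => (e ω).1) (fun ω => g (e ω).2) = 0 := by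
  obtain ⟨hα, hβ⟩ := nonempty_prod.mp (Nonempty.map e ‹_›)
  rw [mutInfo_uniformMass_comp_equiv e Prod.fst (fun x => g x.2)]
  exact mutInfo_uniformMass_prod_eq_zero g

end Uniform

/-- The sample space: the messages, the common randomness `S` and the user's query mask `F`. -/
abbrev Sample (K L M : ℕ) :=
  (Fin K → Fin L → ZMod 2) × (Fin M → ZMod 2) × (Fin K → Fin L → ZMod 2)

namespace Sample

variable {K L M : ℕ}

theorem unif_message (k : Fin K) : Unif (uniformMass (Sample K L M)) (fun ω => ω.1 k) :=
  Unif.comp_fst (X := fun w : Fin K → Fin L → ZMod 2 => w k)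
    ((Unif.comp_fst (X := fun x : Fin L → ZMod 2 => x) unif_uniformMass_self).comp_equiv
      (Equiv.funSplitAt k _))

theorem unif_commonRandomness : Unif (uniformMass (Sample K L M)) (fun ω => ω.2.1) :=
  Unif.comp_snd (Y := fun y : (Fin M → ZMod 2) × (Fin K → Fin L → ZMod 2) => y.1)
    (Unif.comp_fst unif_uniformMass_self)

theorem unif_queryMask : Unif (uniformMass (Sample K L M)) (fun ω => ω.2.2) :=
  Unif.comp_snd (Y := fun y : (Fin M → ZMod 2) × (Fin K → Fin L → ZMod 2) => y.2)
    (Unif.comp_snd unif_uniformMass_self)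

theorem prob_self_eq_prod_mul (w : Fin K → Fin L → ZMod 2) (s : Fin M → ZMod 2)
    (f : Fin K → Fin L → ZMod 2) :
    prob (uniformMass (Sample K L M)) (fun ω => ω) (w, s, f)
      = (∏ k, prob (uniformMass (Sample K L M)) (fun ω => ω.1 k) (w k))
        * prob (uniformMass (Sample K L M)) (fun ω => ω.2.1) s
        * prob (uniformMass (Sample K L M)) (fun ω => ω.2.2) f := by
  simp only [prob_uniformMass_self, unif_message _ _, unif_commonRandomness s, unif_queryMask f]
  simp [Fintype.card_prod, Fintype.card_pi]

theorem ent_commonRandomness : ent (uniformMass (Sample K L M)) (fun ω => ω.2.1) = M := by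
  rw [ent_of_unif unif_commonRandomness]
  simp [Real.logb_pow]

end Sample

theorem exists_sum_eq_of_le_mul {P L M : ℕ} (h : L ≤ P * M) :
    ∃ c : Fin P → ℕ, ∑ r, c r = L ∧ ∀ r, c r ≤ M := by
  induction P generalizing L with
  | zero => exact ⟨Fin.elim0, by simp_all, fun r => r.elim0⟩
  | succ P ih =>
    obtain ⟨c, hsum, hle⟩ := ih (L := L - min L M) (by rw [Nat.succ_mul] at h; omega)
    refine ⟨Fin.cons (min L M) c, ?_, Fin.cases (min_le_right L M) hle⟩
    rw [Fin.sum_univ_succ]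
    simp only [Fin.cons_zero, Fin.cons_succ, hsum]
    omega

/-- A distribution of the `L` bits of a message over servers `1, …, P`: server `r.succ` reads the
bits `equiv.symm ⟨r, i⟩`, the `i`-th of them in round `i < M`. Server `0` is the reference
server, which takes part in all `M` rounds. -/
structure BitLayout (P L M : ℕ) where
  len : Fin P → ℕ
  len_le : ∀ r, len r ≤ M
  equiv : Fin L ≃ Σ r, Fin (len r)

namespace BitLayout

variable {K P L M : ℕ}

theorem nonempty_of_le_mul (h : L ≤ P * M) : Nonempty (BitLayout P L M) :=
  let ⟨c, hsum, hle⟩ := exists_sum_eq_of_le_mul h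
  ⟨⟨c, hle, Fintype.equivOfCardEq (by simp [hsum])⟩⟩

variable (B : BitLayout P L M)

def round (ℓ : Fin L) : Fin M := Fin.castLE (B.len_le _) (B.equiv ℓ).2

def download : Fin (P + 1) → ℕ := Fin.cons M B.len

theorem download_le (n : Fin (P + 1)) : B.download n ≤ M :=
  Fin.cases le_rfl B.len_le n

theorem sum_download : ∑ n, B.download n = M + L := by
  have hlen : ∑ r, B.len r = L := by simpa using (Fintype.card_congr B.equiv).symm
  simp [Fin.sum_univ_succ, download, hlen]

def slotMask (n : Fin (P + 1)) : Fin L → ZMod 2 :=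
  fun ℓ => if (B.equiv ℓ).1.succ = n then 1 else 0

def roundSum (x : Fin L → ZMod 2) : Fin M → ZMod 2 :=
  ∑ ℓ, Pi.single (B.round ℓ) (x ℓ)

def interference (q w : Fin K → Fin L → ZMod 2) : Fin M → ZMod 2 :=
  B.roundSum (∑ j, q j * w j)

def query (k : Fin K) (n : Fin (P + 1)) (v : Fin K → Fin L → ZMod 2) :
    Fin K → Fin L → ZMod 2 :=
  v + Pi.single k (B.slotMask n)

def answer (n : Fin (P + 1)) (q w : Fin K → Fin L → ZMod 2) (s : Fin M → ZMod 2) :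
    Fin (B.download n) → ZMod 2 :=
  fun i => (s + B.interference q w) (Fin.castLE (B.download_le n) i)

def decode (a : ∀ n, Fin (B.download n) → ZMod 2) (ℓ : Fin L) : ZMod 2 :=
  let ⟨r, i⟩ := B.equiv ℓ
  a r.succ i - a 0 (Fin.castLE (B.len_le r) i)

theorem roundSum_add (x y : Fin L → ZMod 2) :
    B.roundSum (x + y) = B.roundSum x + B.roundSum y := by
  simp [roundSum, Pi.single_add, Finset.sum_add_distrib]

theorem interference_add_left (q q' w : Fin K → Fin L → ZMod 2) :
    B.interference (q + q') w = B.interference q w + B.interference q' w := by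
  simp [interference, add_mul, Finset.sum_add_distrib, roundSum_add]

theorem interference_single (k : Fin K) (u : Fin L → ZMod 2) (w : Fin K → Fin L → ZMod 2) :
    B.interference (Pi.single k u) w = B.roundSum (u * w k) := by
  rw [interference, Fintype.sum_eq_single k fun j hj => by simp [hj], Pi.single_eq_same]

theorem slotMask_zero : B.slotMask 0 = 0 := by
  funext ℓ
  simp [slotMask, Fin.succ_ne_zero]

theorem round_equiv_symm_apply (x : Σ r, Fin (B.len r)) :
    B.round (B.equiv.symm x) = Fin.castLE (B.len_le x.1) x.2 := by
  rw [Fin.ext_iff, round, Fin.val_castLE, Fin.val_castLE, B.equiv.apply_symm_apply]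

theorem roundSum_slotMask_mul (r : Fin P) (i : Fin (B.len r)) (x : Fin L → ZMod 2) :
    B.roundSum (B.slotMask r.succ * x) (Fin.castLE (B.len_le r) i)
      = x (B.equiv.symm ⟨r, i⟩) := by
  rw [roundSum, Finset.sum_apply, ← B.equiv.symm.sum_comp, Fintype.sum_eq_single ⟨r, i⟩]
  · simp [round_equiv_symm_apply, slotMask]
  rintro ⟨r', i'⟩ hne
  simp only [round_equiv_symm_apply, slotMask, Equiv.apply_symm_apply, Pi.single_apply,
    Pi.mul_apply, Fin.succ_inj]
  by_cases hr : r' = r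
  · subst hr
    have hi : i ≠ i' := fun h => hne (h ▸ rfl)
    simp [Fin.castLE_inj, hi]
  · simp [hr]

theorem answer_query (k : Fin K) (n : Fin (P + 1)) (v w : Fin K → Fin L → ZMod 2)
    (s : Fin M → ZMod 2) :
    B.answer n (B.query k n v) w s = fun i =>
      (s + B.interference v w + B.roundSum (B.slotMask n * w k))
        (Fin.castLE (B.download_le n) i) := by
  funext i
  simp only [answer, query, interference_add_left, interference_single, add_assoc]

theorem decode_answer (k : Fin K) (v w : Fin K → Fin L → ZMod 2) (s : Fin M → ZMod 2) :
    B.decode (fun n => B.answer n (B.query k n v) w s) = w k := by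
  funext ℓ
  obtain ⟨⟨r, i⟩, rfl⟩ := B.equiv.symm.surjective ℓ
  rw [decode, Equiv.apply_symm_apply]
  have hzero : B.roundSum 0 = 0 := by simp [roundSum]
  simp only [answer_query, slotMask_zero, zero_mul, hzero, Pi.add_apply, Pi.zero_apply, add_zero]
  exact (add_sub_cancel_left _ _).trans (B.roundSum_slotMask_mul r i (w k))

def padEquiv (k : Fin K) : Sample K L M ≃
    ({j // j ≠ k} → Fin L → ZMod 2) ×
      (Fin K → Fin L → ZMod 2) × (Fin L → ZMod 2) × (Fin M → ZMod 2) where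
  toFun ω := (fun j => ω.1 j, ω.2.2, ω.1 k, ω.2.1 + B.interference ω.2.2 ω.1)
  invFun x :=
    let w := (Equiv.funSplitAt k _).symm (x.2.2.1, x.1)
    (w, x.2.2.2 - B.interference x.2.1 w, x.2.1)
  left_inv ω := by
    have : (Equiv.funSplitAt k _).symm (ω.1 k, fun j : {j // j ≠ k} => ω.1 j) = ω.1 :=
      (Equiv.funSplitAt k _).symm_apply_apply ω.1
    simp [this]
  right_inv x := by
    have h := (Equiv.funSplitAt k (Fin L → ZMod 2)).apply_symm_apply (x.2.2.1, x.1)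
    simp only [Equiv.funSplitAt_apply, Prod.mk.injEq] at h
    dsimp only
    rw [h.1, h.2, sub_add_cancel]

theorem identDist_serverView (n : Fin (P + 1)) (k k' : Fin K) :
    IdentDist (uniformMass (Sample K L M))
      (fun ω =>
        (B.query k n ω.2.2, B.answer n (B.query k n ω.2.2) ω.1 ω.2.1, ω.1, ω.2.1))
      (fun ω =>
        (B.query k' n ω.2.2, B.answer n (B.query k' n ω.2.2) ω.1 ω.2.1, ω.1, ω.2.1)) :=
  identDist_uniformMass_of_equiv
    (Equiv.addRight (0, 0, Pi.single k' (B.slotMask n) - Pi.single k (B.slotMask n)))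
    fun ω => by simp [query, add_assoc]

theorem mutInfo_otherMessages_userView (k : Fin K) :
    mutInfo (uniformMass (Sample K L M)) (fun ω => fun j : {j // j ≠ k} => ω.1 j)
      (fun ω => ((fun n => B.query k n ω.2.2),
        (fun n => B.answer n (B.query k n ω.2.2) ω.1 ω.2.1), ω.2.2)) = 0 := by
  convert mutInfo_uniformMass_of_equiv_prod (B.padEquiv k) fun y =>
      ((fun n => B.query k n y.1),
        (fun n i => (y.2.2 + B.roundSum (B.slotMask n * y.2.1)) (Fin.castLE (B.download_le n) i)),
        y.1) using 2
  · rfl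
  · funext ω
    simp [padEquiv, answer_query]

variable (K) in
noncomputable def scheme : FinLenSPIR K (P + 1) L B.download where
  Ω := Sample K L M
  p := uniformMass _
  p_nonneg _ := uniformMass_nonneg _
  p_sum := sum_uniformMass
  𝓢 := Fin M → ZMod 2
  𝓕 := Fin K → Fin L → ZMod 2
  𝓠 _ := Fin K → Fin L → ZMod 2
  W k ω := ω.1 k
  S ω := ω.2.1
  F ω := ω.2.2
  Q k n ω := B.query k n ω.2.2
  A k n ω := B.answer n (B.query k n ω.2.2) ω.1 ω.2.1
  hWunif := Sample.unif_message
  hIndep := Sample.prob_self_eq_prod_mul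
  hQ k n := ⟨B.query k n, fun _ => rfl⟩
  hA _ n := ⟨B.answer n, fun _ => rfl⟩
  hCorrect k := ⟨fun a _ => B.decode a, fun ω => (B.decode_answer k ω.2.2 ω.1 ω.2.1).symm⟩
  hUserPriv := B.identDist_serverView
  hDBPriv := B.mutInfo_otherMessages_userView

variable (K) in
theorem ent_scheme_S : ent (B.scheme K).p (B.scheme K).S = M :=
  Sample.ent_commonRandomness

end BitLayout

theorem finite_length_spir_achievability_general (K N L : ℕ) (hN : 2 ≤ N) :
    ∃ (d : Fin N → ℕ) (sch : FinLenSPIR K N L d),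
      (∑ n, d n) = ⌈(L : ℚ) * N / ((N : ℚ) - 1)⌉₊ ∧
      ent sch.p sch.S = (⌈(L : ℚ) / ((N : ℚ) - 1)⌉₊ : ℝ) := by
  obtain ⟨P, rfl⟩ : ∃ P, N = P + 1 := ⟨N - 1, by omega⟩
  have hP : (0 : ℚ) < P := by exact_mod_cast (show 0 < P by omega)
  have hsub : ((P + 1 : ℕ) : ℚ) - 1 = P := by push_cast; ring
  set M := ⌈(L : ℚ) / P⌉₊
  have hLM : L ≤ P * M := by
    rw [mul_comm]
    exact_mod_cast (div_le_iff₀ hP).mp (Nat.le_ceil ((L : ℚ) / P))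
  obtain ⟨B⟩ := BitLayout.nonempty_of_le_mul hLM
  refine ⟨B.download, B.scheme K, ?_, by rw [B.ent_scheme_S, hsub]⟩
  have hsplit : (L : ℚ) * ((P + 1 : ℕ) : ℚ) / P = L / P + L := by
    push_cast; field_simp; ring
  rw [B.sum_download, hsub, hsplit, Nat.ceil_add_natCast (by positivity)]

/-- (Achievability of finite-length SPIR capacity.) For all `K ≥ 2`,
`N ≥ 2` and every finite message length `L ≥ 1`, there exists a zero-error SPIR scheme with
messages of exactly `L` bits, total download `D = ⌈L·N/(N−1)⌉` bits, and common randomness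
entropy `H(S) = ⌈L/(N−1)⌉` bits; hence the rate `L/⌈L/(1 − 1/N)⌉` is achievable with zero
error at finite length `L`. -/
theorem finite_length_spir_achievability (K N L : ℕ) (hK : 2 ≤ K) (hN : 2 ≤ N)
    (hL : 1 ≤ L) :
    ∃ (d : Fin N → ℕ) (sch : FinLenSPIR K N L d),
      (∑ n, d n) = ⌈(L : ℚ) * N / ((N : ℚ) - 1)⌉₊ ∧
      ent sch.p sch.S = (⌈(L : ℚ) / ((N : ℚ) - 1)⌉₊ : ℝ) :=
  finite_length_spir_achievability_general K N L hN
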